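/- Let J ≥ 2, let u_0,…,u_J ∈ ℝ with u_0 = u_J = 0, let h_1,…,h_J be positive reals, let ẋ_0,…,ẋ_J ∈ ℝ with ḣ_j := ẋ_j − ẋ_{j−1}, let a_{j−1/2} ≥ 0, b_{j−1/2} ∈ ℝ (j = 1,…,J), c_j ∈ ℝ (j = 1,…,J−1). Assume (i) c_j + (b_{j+1/2}−b_{j−1/2})/(h_{j+1}+h_j) ≥ 0 for j = 1,…,J−1, and (ii) ẋ_j − ẋ_{j−1} ≤ 4 a_{j−1/2}/h_j for j = 1,…,J. Define (A′u)_j := a_{j+1/2}(u_{j+1}−u_j)/h_{j+1} − a_{j−1/2}(u_j−u_{j−1})/h_j + ẋ_j(u_{j+1}−u_{j−1})/2 − b_{j+1/2}(u_{j+1}+u_j)/2 + b_{j−1/2}(u_j+u_{j−1})/2 − (h_{j+1}+h_j)c_j u_j/2. Then ∑_{j=1}^{J−1} u_j (A′u)_j + ∑_{j=1}^{J−1} (ḣ_{j+1}+ḣ_j)u_j²/4 ≤ 0. -/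

import Mathlib

/-!
Summation by parts regroups `∑ u_j (A'u)_j` by cells `(x_{k-1}, x_k)`. Together with the mesh
term `∑ (ḣ_{j+1} + ḣ_j) u_j² / 4` and the zero-order terms
`((b_{j+1} - b_j) + (h_{j+1} + h_j) c_j) u_j² / 2`, the cell `k` contributes exactly
`(ḣ_k / 4 - a_k / h_k) (u_k - u_{k-1})²`, which is nonpositive by the mesh-speed condition (ii);
the zero-order terms taken out are nonnegative by the coefficient condition (i).
-/

open Finset

theorem Finset.sum_Icc_shift_add {M : Type*} [AddCommMonoid M] (P Q : ℕ → M) (n : ℕ) :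
    ∑ j ∈ Icc 1 n, (P (j + 1) + Q j) + P 1 + Q (n + 1) = ∑ k ∈ Icc 1 (n + 1), (P k + Q k) := by
  induction n with
  | zero => simp
  | succ n ih =>
    rw [sum_Icc_succ_top (by omega), sum_Icc_succ_top (by omega : 1 ≤ n + 2), ← ih]
    abel

namespace MovingMesh

variable (u h xd a b : ℕ → ℝ)

/- The node terms of `node_term_eq` split among cells: the cell `(x_{k-1}, x_k)` contributes
`leftShare k` at its left node `k - 1` and `rightShare k` at its right node `k`. -/
noncomputable def leftShare (k : ℕ) : ℝ :=
  a k * u (k - 1) * (u k - u (k - 1)) / h k + xd (k - 1) * u (k - 1) * u k / 2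
    - b k * u (k - 1) * u k / 2 + (xd k - xd (k - 1)) * u (k - 1) ^ 2 / 4

noncomputable def rightShare (k : ℕ) : ℝ :=
  -(a k * u k * (u k - u (k - 1)) / h k) - xd k * u k * u (k - 1) / 2
    + b k * u k * u (k - 1) / 2 + (xd k - xd (k - 1)) * u k ^ 2 / 4

theorem leftShare_add_rightShare (k : ℕ) :
    leftShare u h xd a b k + rightShare u h xd a b k
      = ((xd k - xd (k - 1)) / 4 - a k / h k) * (u k - u (k - 1)) ^ 2 := by
  simp only [leftShare, rightShare]
  ring

theorem leftShare_add_rightShare_nonpos {k : ℕ} (hspeed : xd k - xd (k - 1) ≤ 4 * a k / h k) :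
    leftShare u h xd a b k + rightShare u h xd a b k ≤ 0 := by
  rw [leftShare_add_rightShare]
  refine mul_nonpos_of_nonpos_of_nonneg ?_ (sq_nonneg _)
  linarith [mul_div_assoc 4 (a k) (h k)]

theorem node_term_eq (c : ℕ → ℝ) (j : ℕ) :
    u j * (a (j + 1) * (u (j + 1) - u j) / h (j + 1)
        - a j * (u j - u (j - 1)) / h j
        + xd j * (u (j + 1) - u (j - 1)) / 2
        - b (j + 1) * (u (j + 1) + u j) / 2
        + b j * (u j + u (j - 1)) / 2
        - (h (j + 1) + h j) * c j * u j / 2)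
      + ((xd (j + 1) - xd j) + (xd j - xd (j - 1))) * u j ^ 2 / 4
      = leftShare u h xd a b (j + 1) + rightShare u h xd a b j
        - ((b (j + 1) - b j) + (h (j + 1) + h j) * c j) * u j ^ 2 / 2 := by
  simp only [leftShare, rightShare, Nat.add_sub_cancel]
  ring

end MovingMesh

theorem add_mul_nonneg_of_add_div_nonneg {s c d : ℝ} (hs : 0 < s) (h : 0 ≤ c + d / s) :
    0 ≤ d + s * c := by
  have := mul_nonneg hs.le h
  rwa [mul_add, mul_div_cancel₀ d hs.ne', add_comm] at this

open MovingMesh in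
theorem moving_mesh_negSemidef_nonconservative
    (J : ℕ) (hJ : 2 ≤ J)
    (u h xd a b c A'u : ℕ → ℝ)
    (hu0 : u 0 = 0) (huJ : u J = 0)
    (hh : ∀ j ∈ Finset.Icc 1 J, 0 < h j)
    (hcoef : ∀ j ∈ Finset.Icc 1 (J - 1),
      0 ≤ c j + (b (j + 1) - b j) / (h (j + 1) + h j))
    (hspeed : ∀ j ∈ Finset.Icc 1 J, xd j - xd (j - 1) ≤ 4 * a j / h j)
    (hA'u : ∀ j ∈ Finset.Icc 1 (J - 1), A'u j =
      a (j + 1) * (u (j + 1) - u j) / h (j + 1)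
        - a j * (u j - u (j - 1)) / h j
        + xd j * (u (j + 1) - u (j - 1)) / 2
        - b (j + 1) * (u (j + 1) + u j) / 2
        + b j * (u j + u (j - 1)) / 2
        - (h (j + 1) + h j) * c j * u j / 2) :
    ∑ j ∈ Finset.Icc 1 (J - 1), u j * A'u j
      + ∑ j ∈ Finset.Icc 1 (J - 1),
          ((xd (j + 1) - xd j) + (xd j - xd (j - 1))) * u j ^ 2 / 4
    ≤ 0 := by
  obtain ⟨n, rfl⟩ : ∃ n, J = n + 1 := ⟨J - 1, by omega⟩
  simp only [Nat.add_sub_cancel] at hcoef hA'u ⊢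
  have hcells : ∑ j ∈ Icc 1 n, (leftShare u h xd a b (j + 1) + rightShare u h xd a b j)
      = ∑ k ∈ Icc 1 (n + 1), (leftShare u h xd a b k + rightShare u h xd a b k) := by
    have hleft : leftShare u h xd a b 1 = 0 := by simp [leftShare, hu0]
    have hright : rightShare u h xd a b (n + 1) = 0 := by simp [rightShare, huJ]
    simpa [hleft, hright] using sum_Icc_shift_add (leftShare u h xd a b) (rightShare u h xd a b) n
  rw [← sum_add_distrib, sum_congr rfl fun j hj => (hA'u j hj ▸ node_term_eq u h xd a b c j),
    sum_sub_distrib, hcells, sub_nonpos]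
  refine (sum_nonpos fun k hk => leftShare_add_rightShare_nonpos u h xd a b (hspeed k hk)).trans
    (sum_nonneg fun j hj => ?_)
  obtain ⟨hj1, hjn⟩ := mem_Icc.1 hj
  have hpos : 0 < h (j + 1) + h j :=
    add_pos (hh _ (mem_Icc.2 ⟨by omega, by omega⟩)) (hh _ (mem_Icc.2 ⟨hj1, by omega⟩))
  exact div_nonneg (mul_nonneg (add_mul_nonneg_of_add_div_nonneg hpos (hcoef j hj))
    (sq_nonneg _)) zero_le_two
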